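/- arXiv:1901.11455 — 3 statements merged into one kernel-verified Lean document; each statement's English description precedes it below -/
import Mathlib

section
/- Let S be an inverse semigroup and ρ a left congruence on S. Then the set InK(ρ) = { a ∈ S : a ρ aa⁻¹ } is a full inverse subsemigroup of S, i.e. it contains all idempotents of S, is closed under multiplication, and is closed under taking inverses. -/
class InverseSemigroup (S : Type*) extends Semigroup S where
  inv : S → S
  mul_inv_mul : ∀ a : S, a * inv a * a = a
  inv_mul_inv : ∀ a : S, inv a * a * inv a = inv a
  inv_unique : ∀ a b : S, a * b * a = a → b * a * b = b → b = inv a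

open InverseSemigroup

/-- `e` is an idempotent. -/
def IsIdem {S : Type*} [Mul S] (e : S) : Prop := e * e = e

/-- `r` is a left congruence: an equivalence relation compatible with left multiplication. -/
def IsLeftCongruence {S : Type*} [Semigroup S] (r : S → S → Prop) : Prop :=
  Equivalence r ∧ ∀ a b c : S, r a b → r (c * a) (c * b)

/-- The inverse kernel of a relation: elements related to `a * a⁻¹`. -/
def InK {S : Type*} [InverseSemigroup S] (r : S → S → Prop) : Set S :=
  {a | r a (a * inv a)}

/-- The kernel: elements related to some idempotent. -/
def lker {S : Type*} [InverseSemigroup S] (r : S → S → Prop) : Set S :=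
  {a | ∃ e, IsIdem e ∧ r a e}

/-- `τ` is a congruence on the semilattice of idempotents `E(S)`. -/
def IsECong {S : Type*} [InverseSemigroup S] (τ : S → S → Prop) : Prop :=
  (∀ e f, τ e f → IsIdem e ∧ IsIdem f) ∧
  (∀ e, IsIdem e → τ e e) ∧
  (∀ e f, τ e f → τ f e) ∧
  (∀ e f g, τ e f → τ f g → τ e g) ∧
  (∀ e f g, IsIdem g → τ e f → τ (g * e) (g * f))

/-- The normaliser of a congruence on the idempotents. -/
def normaliser {S : Type*} [InverseSemigroup S] (τ : S → S → Prop) : Set S :=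
  {a | ∀ e f, τ e f → τ (a * e * inv a) (a * f * inv a) ∧ τ (inv a * e * a) (inv a * f * a)}

/-- `T` is a full inverse subsemigroup of `S`. -/
def IsFullInverseSub {S : Type*} [InverseSemigroup S] (T : Set S) : Prop :=
  (∀ e : S, IsIdem e → e ∈ T) ∧ (∀ a b, a ∈ T → b ∈ T → a * b ∈ T) ∧
  (∀ a, a ∈ T → inv a ∈ T)


namespace InverseSemigroup

variable {S : Type*} [InverseSemigroup S]

theorem inv_inv (a : S) : inv (inv a) = a :=
  (inv_unique (inv a) a (inv_mul_inv a) (mul_inv_mul a)).symm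

theorem isIdem_mul_inv (a : S) : IsIdem (a * inv a) := by
  rw [IsIdem, ← mul_assoc, mul_inv_mul]

theorem isIdem_inv_mul (a : S) : IsIdem (inv a * a) := by
  rw [IsIdem, ← mul_assoc, inv_mul_inv]

theorem IsIdem.inv_eq {e : S} (he : IsIdem e) : inv e = e := by
  have hee : e * e * e = e := by rw [he, he]
  exact (inv_unique e e hee hee).symm

/-- If `x = (ef)⁻¹` then `f x e` is also an inverse of `ef`, so `x = f x e`, which makes `x`
idempotent; hence `ef = x⁻¹ = x`. -/
theorem IsIdem.mul {e f : S} (he : IsIdem e) (hf : IsIdem f) : IsIdem (e * f) := by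
  set x := inv (e * f)
  have hx : x * (e * f) * x = x := inv_mul_inv (e * f)
  have hfxe : f * x * e = x := by
    apply inv_unique
    · calc e * f * (f * x * e) * (e * f) = e * (f * f) * x * ((e * e) * f) := by
            simp only [mul_assoc]
        _ = e * f * x * (e * f) := by rw [he, hf]
        _ = e * f := mul_inv_mul (e * f)
    · calc f * x * e * (e * f) * (f * x * e) = f * (x * ((e * e) * (f * f)) * x) * e := by
            simp only [mul_assoc]
        _ = f * x * e := by rw [he, hf, hx]
  have hxx : IsIdem x := by
    calc x * x = f * (x * (e * f) * x) * e := by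
          conv_lhs => rw [← hfxe]
          simp only [mul_assoc]
      _ = x := by rw [hx, hfxe]
  rwa [← inv_inv (e * f), hxx.inv_eq]

theorem IsIdem.mul_comm {e f : S} (he : IsIdem e) (hf : IsIdem f) : e * f = f * e := by
  have hef : e * f * (f * e) * (e * f) = e * f := by
    calc e * f * (f * e) * (e * f) = e * (f * f) * (e * e) * f := by simp only [mul_assoc]
      _ = e * f * (e * f) := by rw [he, hf]; simp only [mul_assoc]
      _ = e * f := he.mul hf
  have hfe : f * e * (e * f) * (f * e) = f * e := by
    calc f * e * (e * f) * (f * e) = f * (e * e) * (f * f) * e := by simp only [mul_assoc]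
      _ = f * e * (f * e) := by rw [he, hf]; simp only [mul_assoc]
      _ = f * e := hf.mul he
  rw [inv_unique _ _ hef hfe, (he.mul hf).inv_eq]

theorem mul_inv_rev (a b : S) : inv (a * b) = inv b * inv a := by
  have hcomm := (isIdem_mul_inv b).mul_comm (isIdem_inv_mul a)
  refine (inv_unique _ _ ?_ ?_).symm
  · calc a * b * (inv b * inv a) * (a * b) = a * (b * inv b * (inv a * a)) * b := by
          simp only [mul_assoc]
      _ = a * inv a * a * (b * inv b * b) := by rw [hcomm]; simp only [mul_assoc]
      _ = a * b := by rw [mul_inv_mul, mul_inv_mul]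
  · calc inv b * inv a * (a * b) * (inv b * inv a)
          = inv b * (inv a * a * (b * inv b)) * inv a := by simp only [mul_assoc]
      _ = inv b * b * inv b * (inv a * a * inv a) := by rw [← hcomm]; simp only [mul_assoc]
      _ = inv b * inv a := by rw [inv_mul_inv, inv_mul_inv]

theorem IsIdem.mul_eq_mul_mul_inv_mul {e : S} (he : IsIdem e) (a : S) :
    a * e = a * e * inv a * a :=
  calc a * e = a * inv a * a * e := by rw [mul_inv_mul]
    _ = a * (inv a * a * e) := by simp only [mul_assoc]
    _ = a * (e * (inv a * a)) := by rw [(isIdem_inv_mul a).mul_comm he]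
    _ = a * e * inv a * a := by simp only [mul_assoc]

end InverseSemigroup

section InverseKernel

variable {S : Type*} [InverseSemigroup S] {r : S → S → Prop}

theorem isIdem_mem_InK (hr : ∀ x, r x x) {e : S} (he : IsIdem e) : e ∈ InK r := by
  show r e (e * inv e)
  rw [he.inv_eq, he]
  exact hr e

theorem inv_mem_InK (hr : IsLeftCongruence r) {a : S} (ha : a ∈ InK r) : inv a ∈ InK r := by
  have h := hr.2 _ _ (inv a) ha
  rw [← mul_assoc, inv_mul_inv] at h
  show r (inv a) (inv a * inv (inv a))
  rw [InverseSemigroup.inv_inv]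
  exact hr.1.symm h

/-- With `k = a b b⁻¹ a⁻¹ = ab (ab)⁻¹`: `ab ρ a b b⁻¹ = k a ρ k a a⁻¹ = k`. -/
theorem mul_mem_InK (hr : IsLeftCongruence r) {a b : S} (ha : a ∈ InK r) (hb : b ∈ InK r) :
    a * b ∈ InK r := by
  have hab : r (a * b) (a * (b * inv b)) := hr.2 _ _ a hb
  have hka : r (a * (b * inv b) * inv a * a) (a * (b * inv b) * inv a * (a * inv a)) :=
    hr.2 _ _ _ ha
  rw [← (isIdem_mul_inv b).mul_eq_mul_mul_inv_mul a, mul_assoc _ (inv a),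
    ← mul_assoc (inv a), inv_mul_inv] at hka
  show r (a * b) (a * b * inv (a * b))
  rw [InverseSemigroup.mul_inv_rev, ← mul_assoc, mul_assoc a]
  exact hr.1.trans hab hka

end InverseKernel

theorem stmt0 {S : Type*} [InverseSemigroup S] (r : S → S → Prop)
    (hr : IsLeftCongruence r) :
    IsFullInverseSub (InK r) :=
  ⟨fun _ => isIdem_mem_InK hr.1.refl, fun _ _ => mul_mem_InK hr, fun _ => inv_mem_InK hr⟩
end

section
/- In the bicyclic monoid B, for k, j ≥ 0 and d, c ≥ 1, the inclusion T_{k,d} ⊆ T_{j,c} holds if and only if j ≤ k and c divides d. -/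
open InverseSemigroup

/-- Multiplication of the bicyclic monoid on ℕ × ℕ. -/
def bmul (p q : ℕ × ℕ) : ℕ × ℕ :=
  (p.1 + (max p.2 q.1 - p.2), q.2 + (max p.2 q.1 - q.1))

/-- The subset `T_{k,d}` of the bicyclic monoid. -/
def Tkd (k d : ℕ) : Set (ℕ × ℕ) :=
  {p | k ≤ p.1 ∧ k ≤ p.2 ∧ (d : ℤ) ∣ ((p.1 : ℤ) - (p.2 : ℤ))}

theorem Tkd_mono {j k c d : ℕ} (hjk : j ≤ k) (hcd : c ∣ d) : Tkd k d ⊆ Tkd j c :=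
  fun _ ⟨h1, h2, h3⟩ =>
    ⟨hjk.trans h1, hjk.trans h2, (Int.natCast_dvd_natCast.mpr hcd).trans h3⟩

theorem diag_mem_Tkd (k d : ℕ) : (k, k) ∈ Tkd k d :=
  ⟨le_rfl, le_rfl, by simp⟩

theorem add_left_mem_Tkd (k d : ℕ) : (k + d, k) ∈ Tkd k d :=
  ⟨Nat.le_add_right k d, le_rfl, by simp⟩

theorem le_of_Tkd_subset {j k c d : ℕ} (h : Tkd k d ⊆ Tkd j c) : j ≤ k :=
  (h (diag_mem_Tkd k d)).1

theorem dvd_of_Tkd_subset {j k c d : ℕ} (h : Tkd k d ⊆ Tkd j c) : c ∣ d := by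
  have hdvd : (c : ℤ) ∣ d := by simpa using (h (add_left_mem_Tkd k d)).2.2
  exact_mod_cast hdvd

theorem stmt15_general (k j d c : ℕ) :
    Tkd k d ⊆ Tkd j c ↔ (j ≤ k ∧ c ∣ d) :=
  ⟨fun h => ⟨le_of_Tkd_subset h, dvd_of_Tkd_subset h⟩, fun ⟨hjk, hcd⟩ => Tkd_mono hjk hcd⟩

theorem stmt15 (k j d c : ℕ) (hd : 1 ≤ d) (hc : 1 ≤ c) :
    Tkd k d ⊆ Tkd j c ↔ (j ≤ k ∧ c ∣ d) :=
  stmt15_general k j d c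
end

section
/- Let E be a semilattice in which every element lies below a maximal element, and let F ⊆ E be a subsemilattice containing all maximal elements of E. Let K = { e ∈ E : ∃ f ∈ F, f ≤ e }. Then K is a single congruence class of the congruence τ = ⟨F × F⟩ generated on E by identifying all elements of F. -/
open InverseSemigroup

/-!
Every `e ∈ K` lies between two elements of `F`: above some `f ∈ F` by definition, and below a
maximal element `m`, which is in `F`. Multiplying `m τ f` by `e` gives `e τ f`, so `K` lies in
one `τ`-class. Conversely, because `F` is closed under products, `K` is a filter, and a
filter's membership relation `x ∈ K ↔ y ∈ K` is a congruence identifying `F × F`; as `τ` is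
the smallest such, `τ`-classes do not leave `K`.
-/

section UpClosure

variable {E : Type*} [CommSemigroup E]

def upClosure (F : Set E) : Set E := {e | ∃ f ∈ F, f * e = f}

variable {F : Set E}

theorem mem_upClosure_of_mul_eq {a b : E} (ha : a ∈ upClosure F) (hab : a * b = a) :
    b ∈ upClosure F := by
  obtain ⟨f, hf, hfa⟩ := ha
  exact ⟨f, hf, by rw [← hfa, mul_assoc, hab]⟩

theorem mem_upClosure_of_mem {f : E} (hf : f ∈ F) (hff : f * f = f) : f ∈ upClosure F :=
  ⟨f, hf, hff⟩

theorem mul_mem_upClosure (hF : ∀ a ∈ F, ∀ b ∈ F, a * b ∈ F) {a b : E}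
    (ha : a ∈ upClosure F) (hb : b ∈ upClosure F) : a * b ∈ upClosure F := by
  obtain ⟨f, hf, hfa⟩ := ha
  obtain ⟨g, hg, hgb⟩ := hb
  refine ⟨f * g, hF f hf g hg, ?_⟩
  rw [mul_mul_mul_comm, hfa, hgb]

theorem mem_upClosure_of_mul_mem (idem : ∀ e : E, e * e = e) {c u : E}
    (hcu : c * u ∈ upClosure F) : c ∈ upClosure F ∧ u ∈ upClosure F :=
  ⟨mem_upClosure_of_mul_eq hcu (by rw [mul_right_comm, idem]),
    mem_upClosure_of_mul_eq hcu (by rw [mul_assoc, idem])⟩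

theorem mul_mem_upClosure_iff (idem : ∀ e : E, e * e = e)
    (hF : ∀ a ∈ F, ∀ b ∈ F, a * b ∈ F) {c u : E} :
    c * u ∈ upClosure F ↔ c ∈ upClosure F ∧ u ∈ upClosure F :=
  ⟨mem_upClosure_of_mul_mem idem, fun h => mul_mem_upClosure hF h.1 h.2⟩

theorem mul_mem_upClosure_congr (idem : ∀ e : E, e * e = e)
    (hF : ∀ a ∈ F, ∀ b ∈ F, a * b ∈ F) {x y : E} (c : E)
    (hxy : x ∈ upClosure F ↔ y ∈ upClosure F) :
    c * x ∈ upClosure F ↔ c * y ∈ upClosure F := by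
  rw [mul_mem_upClosure_iff idem hF, mul_mem_upClosure_iff idem hF, hxy]

theorem rel_of_mul_eq_of_mul_eq {σ : E → E → Prop}
    (hσ : ∀ x y c : E, σ x y → σ (c * x) (c * y)) (hFσ : ∀ x ∈ F, ∀ y ∈ F, σ x y)
    {f g m : E} (hf : f ∈ F) (hm : m ∈ F) (hfg : f * g = f) (hgm : g * m = g) : σ g f := by
  have := hσ m f g (hFσ m hm f hf)
  rwa [hgm, mul_comm g f, hfg] at this

end UpClosure

theorem stmt19 {E : Type*} [CommSemigroup E] [Nonempty E]
    (idem : ∀ e : E, e * e = e)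
    (hmax : ∀ e : E, ∃ m : E, (∀ x, m * x = m → x = m) ∧ e * m = e)
    (F : Set E) (hF : ∀ a ∈ F, ∀ b ∈ F, a * b ∈ F)
    (hFmax : ∀ m : E, (∀ x, m * x = m → x = m) → m ∈ F) :
    let τ : E → E → Prop := fun a b => ∀ σ : E → E → Prop,
      (Equivalence σ ∧ ∀ x y c : E, σ x y → σ (c * x) (c * y)) →
      (∀ x ∈ F, ∀ y ∈ F, σ x y) → σ a b
    let K : Set E := {e | ∃ f ∈ F, f * e = f}
    K.Nonempty ∧ (∀ g ∈ K, ∀ h ∈ K, τ g h) ∧ (∀ g h : E, τ g h → h ∈ K → g ∈ K) := by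
  intro τ K
  refine ⟨?_, ?_, ?_⟩
  · obtain ⟨m, hm, -⟩ := hmax (Classical.arbitrary E)
    exact ⟨m, mem_upClosure_of_mem (hFmax m hm) (idem m)⟩
  · rintro g ⟨f, hf, hfg⟩ h ⟨f', hf', hf'h⟩ σ ⟨hσ, hσmul⟩ hFσ
    obtain ⟨m, hm, hgm⟩ := hmax g
    obtain ⟨m', hm', hhm'⟩ := hmax h
    have hgf : σ g f := rel_of_mul_eq_of_mul_eq hσmul hFσ hf (hFmax m hm) hfg hgm
    have hhf' : σ h f' := rel_of_mul_eq_of_mul_eq hσmul hFσ hf' (hFmax m' hm') hf'h hhm'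
    exact hσ.trans hgf (hσ.trans (hFσ f hf f' hf') (hσ.symm hhf'))
  · intro g h hgh hh
    have hK : g ∈ K ↔ h ∈ K :=
      hgh (fun x y => x ∈ K ↔ y ∈ K)
        ⟨⟨fun _ => Iff.rfl, Iff.symm, Iff.trans⟩,
          fun _ _ c => mul_mem_upClosure_congr idem hF c⟩
        (fun x hx y hy => iff_of_true (mem_upClosure_of_mem hx (idem x))
          (mem_upClosure_of_mem hy (idem y)))
    exact hK.mpr hh
end
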